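/- Let A be an admissible system of partial isomorphisms of a complemented modular lattice and α : [0,e] → [0,f] in A with g = e ∧ f. If α(g) = g, then e is perspective to f. -/
import Mathlib


/-- A partial isomorphism of a bounded lattice `L`: a lattice isomorphism between
the lower sections `[0, dom]` and `[0, cod]`, encoded by functions on `L`. -/
structure PIso (L : Type*) [Lattice L] [BoundedOrder L] where
  dom : L
  cod : L
  map : L → L
  inv : L → L
  map_le : ∀ x, x ≤ dom → map x ≤ cod
  inv_le : ∀ y, y ≤ cod → inv y ≤ dom
  left_inv : ∀ x, x ≤ dom → inv (map x) = x
  right_inv : ∀ y, y ≤ cod → map (inv y) = y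
  map_le_iff : ∀ x y, x ≤ dom → y ≤ dom → (map x ≤ map y ↔ x ≤ y)
  map_dom : map dom = cod

/-- An admissible system of partial isomorphisms: closed under restriction (A1),
trivial-meet members yield perspectivity with trivial meets of axes (A2), and closed
under the operation `α ↦ α#` (A3). -/
def Admissible {L : Type*} [Lattice L] [BoundedOrder L] (A : Set (PIso L)) : Prop :=
  (∀ α ∈ A, ∀ e' ≤ α.dom, ∃ β ∈ A, β.dom = e' ∧ β.cod = α.map e' ∧
      ∀ x ≤ e', β.map x = α.map x) ∧
  (∀ α ∈ A, α.dom ⊓ α.cod = ⊥ → ∃ c, α.dom ⊔ α.cod = α.dom ⊔ c ∧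
      α.dom ⊔ α.cod = α.cod ⊔ c ∧ α.dom ⊓ c = ⊥ ∧ α.cod ⊓ c = ⊥) ∧
  (∀ α ∈ A, ∃ β ∈ A, β.dom = α.inv (α.dom ⊓ α.cod) ∧ β.cod = α.map (α.dom ⊓ α.cod) ∧
      ∀ x ≤ β.dom, β.map x = α.map (α.map x))

/-- `a` and `b` are perspective: they have a common complement. -/
def Persp {L : Type*} [Lattice L] [BoundedOrder L] (a b : L) : Prop :=
  ∃ c, IsCompl a c ∧ IsCompl b c

/-- If `A` is an admissible system of partial isomorphisms of a
complemented modular lattice, `α : [0,e] → [0,f]` is in `A`, `g = e ⊓ f`, and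
`α(g) = g`, then `e` is perspective to `f`. -/
theorem stmt10 {L : Type*} [Lattice L] [BoundedOrder L] [IsModularLattice L]
    [ComplementedLattice L] (A : Set (PIso L)) (hA : Admissible A)
    (α : PIso L) (hα : α ∈ A)
    (h : α.map (α.dom ⊓ α.cod) = α.dom ⊓ α.cod) :
    Persp α.dom α.cod := by
  set e := α.dom with he
  set f := α.cod with hf
  set g := e ⊓ f with hg
  have hge : g ≤ e := inf_le_left
  have hgf : g ≤ f := inf_le_right
  -- relative complement of g in [0,e]
  obtain ⟨t, ht⟩ := exists_isCompl g
  set e₁ := t ⊓ e with he₁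
  have he₁e : e₁ ≤ e := inf_le_right
  have hsup : g ⊔ e₁ = e := by
    rw [he₁, ← sup_inf_assoc_of_le t hge, ht.sup_eq_top, top_inf_eq]
  have hinf : g ⊓ e₁ = ⊥ := by
    have : g ⊓ e₁ ≤ g ⊓ t := inf_le_inf_left g inf_le_left
    rw [ht.inf_eq_bot] at this
    exact le_bot_iff.mp this
  -- basic facts about α
  have map_bot : α.map ⊥ = ⊥ := by
    have h1 : α.inv ⊥ ≤ e := α.inv_le ⊥ bot_le
    have h2 : α.map ⊥ ≤ α.map (α.inv ⊥) :=
      (α.map_le_iff ⊥ (α.inv ⊥) bot_le h1).mpr bot_le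
    rw [α.right_inv ⊥ bot_le] at h2
    exact le_bot_iff.mp h2
  have hmapg : α.map g = g := h
  have hinvg : α.inv g = g := by
    have := α.left_inv g hge
    rwa [hmapg] at this
  have inv_mono : ∀ y₁ y₂, y₁ ≤ f → y₂ ≤ f → y₁ ≤ y₂ → α.inv y₁ ≤ α.inv y₂ := by
    intro y₁ y₂ hy₁ hy₂ hle
    have := (α.map_le_iff (α.inv y₁) (α.inv y₂) (α.inv_le _ hy₁) (α.inv_le _ hy₂))
    rw [α.right_inv _ hy₁, α.right_inv _ hy₂] at this
    exact this.mp hle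
  set f₁ := α.map e₁ with hf₁
  have hf₁f : f₁ ≤ f := α.map_le e₁ he₁e
  have hinvf₁ : α.inv f₁ = e₁ := α.left_inv e₁ he₁e
  -- f = g ⊔ f₁
  have hsupf : g ⊔ f₁ = f := by
    have hy : g ⊔ f₁ ≤ f := sup_le hgf hf₁f
    have h1 : g ≤ α.inv (g ⊔ f₁) := by
      have := inv_mono g (g ⊔ f₁) hgf hy le_sup_left
      rwa [hinvg] at this
    have h2 : e₁ ≤ α.inv (g ⊔ f₁) := by
      have := inv_mono f₁ (g ⊔ f₁) hf₁f hy le_sup_right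
      rwa [hinvf₁] at this
    have h3 : e ≤ α.inv (g ⊔ f₁) := by rw [← hsup]; exact sup_le h1 h2
    have h4 : α.inv (g ⊔ f₁) = e := le_antisymm (α.inv_le _ hy) h3
    have := α.right_inv (g ⊔ f₁) hy
    rw [h4, α.map_dom] at this
    exact this.symm
  -- f₁ ⊓ g = ⊥
  have hf₁g : f₁ ⊓ g = ⊥ := by
    have hz : f₁ ⊓ g ≤ f := le_trans inf_le_left hf₁f
    have h1 : α.inv (f₁ ⊓ g) ≤ e₁ := by
      have := inv_mono (f₁ ⊓ g) f₁ hz hf₁f inf_le_left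
      rwa [hinvf₁] at this
    have h2 : α.inv (f₁ ⊓ g) ≤ g := by
      have := inv_mono (f₁ ⊓ g) g hz hgf inf_le_right
      rwa [hinvg] at this
    have h3 : α.inv (f₁ ⊓ g) = ⊥ := le_bot_iff.mp (by
      rw [← hinf]; exact le_inf h2 h1)
    have := α.right_inv (f₁ ⊓ g) hz
    rw [h3, map_bot] at this
    exact this.symm
  -- e₁ ⊓ f₁ = ⊥
  have he₁f₁ : e₁ ⊓ f₁ = ⊥ := by
    have h1 : e₁ ⊓ f₁ ≤ g := le_inf (le_trans inf_le_left he₁e)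
      (le_trans inf_le_right hf₁f)
    have : e₁ ⊓ f₁ ≤ f₁ ⊓ g := le_inf inf_le_right h1
    rw [hf₁g] at this
    exact le_bot_iff.mp this
  -- restriction β of α to e₁ (axiom A1)
  obtain ⟨β, hβA, hβdom, hβcod, -⟩ := hA.1 α hα e₁ he₁e
  -- axiom A2 applied to β gives the axis c
  obtain ⟨c, hc1, hc2, hc3, hc4⟩ := hA.2.1 β hβA (by rw [hβdom, hβcod, ← hf₁]; exact he₁f₁)
  simp only [hβdom, hβcod, ← hf₁] at hc1 hc2 hc3 hc4
  -- c is a common relative complement of e and f in [0, e ⊔ f]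
  have hcle : c ≤ e₁ ⊔ f₁ := by rw [hc1]; exact le_sup_right
  have hef : e ⊔ f = g ⊔ (e₁ ⊔ f₁) := by
    rw [← hsup, ← hsupf, sup_sup_sup_comm, sup_idem]
  have hesup : e ⊔ c = e ⊔ f := by
    have h5 : e ⊔ c = g ⊔ (e₁ ⊔ c) := by rw [← sup_assoc, hsup]
    rw [h5, ← hc1, ← hef]
  have hfsup : f ⊔ c = e ⊔ f := by
    have h5 : f ⊔ c = g ⊔ (f₁ ⊔ c) := by rw [← sup_assoc, hsupf]
    rw [h5, ← hc2, ← hef]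
  have hec : e ⊓ c = ⊥ := by
    have h1 : f₁ ⊓ e ≤ f₁ ⊓ g := le_inf inf_le_left
      (le_inf inf_le_right (le_trans inf_le_left hf₁f))
    have h2 : e ⊓ (e₁ ⊔ f₁) ≤ e₁ := by
      rw [inf_comm, sup_inf_assoc_of_le f₁ he₁e]
      have : f₁ ⊓ e ≤ (⊥ : L) := by rw [← hf₁g]; exact h1
      exact sup_le le_rfl (le_trans this bot_le)
    have h3 : e ⊓ c ≤ e₁ ⊓ c := le_inf
      (le_trans (inf_le_inf_left e hcle) h2) inf_le_right
    rw [hc3] at h3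
    exact le_bot_iff.mp h3
  have hfc : f ⊓ c = ⊥ := by
    have h1 : e₁ ⊓ f ≤ g := le_inf (le_trans inf_le_left he₁e) inf_le_right
    have h2 : e₁ ⊓ f ≤ (⊥ : L) := by
      rw [← hinf]; exact le_inf h1 inf_le_left
    have h3 : f ⊓ (e₁ ⊔ f₁) ≤ f₁ := by
      rw [inf_comm, sup_comm e₁ f₁, sup_inf_assoc_of_le e₁ hf₁f]
      exact sup_le le_rfl (le_trans h2 bot_le)
    have h4 : f ⊓ c ≤ f₁ ⊓ c := le_inf
      (le_trans (inf_le_inf_left f hcle) h3) inf_le_right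
    rw [hc4] at h4
    exact le_bot_iff.mp h4
  -- extend c by a complement k of e ⊔ f
  obtain ⟨k, hk⟩ := exists_isCompl (e ⊔ f)
  have hcef : c ≤ e ⊔ f := le_trans hcle (sup_le (le_trans he₁e le_sup_left)
    (le_trans hf₁f le_sup_right))
  have hkey : (c ⊔ k) ⊓ (e ⊔ f) = c := by
    rw [sup_inf_assoc_of_le k hcef, inf_comm k, hk.inf_eq_bot, sup_bot_eq]
  refine ⟨c ⊔ k, ?_, ?_⟩
  · constructor
    · rw [disjoint_iff]
      have h5 : e ⊓ (c ⊔ k) ≤ c := by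
        have h6 : e ⊓ (c ⊔ k) ≤ (c ⊔ k) ⊓ (e ⊔ f) :=
          le_inf inf_le_right (le_trans inf_le_left le_sup_left)
        rwa [hkey] at h6
      exact le_bot_iff.mp (hec ▸ le_inf inf_le_left h5)
    · rw [codisjoint_iff, ← sup_assoc, hesup, hk.sup_eq_top]
  · constructor
    · rw [disjoint_iff]
      have h5 : f ⊓ (c ⊔ k) ≤ c := by
        have h6 : f ⊓ (c ⊔ k) ≤ (c ⊔ k) ⊓ (e ⊔ f) :=
          le_inf inf_le_right (le_trans inf_le_left le_sup_right)
        rwa [hkey] at h6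
      exact le_bot_iff.mp (hfc ▸ le_inf inf_le_left h5)
    · rw [codisjoint_iff, ← sup_assoc, hfsup, hk.sup_eq_top]
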